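/- Fix α1, α2, α3 > 0 and, for 0 < x1 < x2, set R(x1, x2) = 1 - G(x1)^(α1+α3) - G(x2)^(α2+α3) + G(x1)^(α1+α3) * G(x2)^(α2). Then R(x1, x2) > 0 and the first component of the hazard gradient satisfies -∂/∂x1 [ln R(x1, x2)] = f(x1; α1+α3) * (1 - G(x2)^(α2)) / R(x1, x2), where f(x1; α1+α3) = a*b*(α1+α3)*x1^(b-1)*exp(-a*x1^b*(exp(c*x1^d)-1)+c*x1^d)*(1+(c*d/b)*x1^d-exp(-c*x1^d))*G(x1)^(α1+α3-1). -/

import Mathlib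

open Real

/-- Base CDF of the exponentiated generalized Weibull–Gompertz distribution. -/
noncomputable def G (a b c d x : ℝ) : ℝ :=
  1 - Real.exp (-(a * x ^ b * (Real.exp (c * x ^ d) - 1)))

/-- EGWGD(a,b,c,d,α) probability density. -/
noncomputable def egwgdPdf (a b c d α x : ℝ) : ℝ :=
  a * b * α * x ^ (b - 1) *
    Real.exp (-(a * x ^ b * (Real.exp (c * x ^ d) - 1)) + c * x ^ d) *
    (1 + (c * d / b) * x ^ d - Real.exp (-(c * x ^ d))) *
    (G a b c d x) ^ (α - 1)

/-! `f(·; α)` is the derivative of `G^α`, so the formula is the chain rule for `log R`.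
`R` is positive because, with `p = G(x₁)^(α₁+α₃)`, `q = G(x₂)^α₂`, `r = G(x₂)^α₃`,
it equals `(1 - p)(1 - q) + q(1 - r)` and `0 < G < 1`. -/

lemma one_sub_sub_add_pos {p q r : ℝ} (hp : p < 1) (hq₀ : 0 ≤ q) (hq : q < 1) (hr : r < 1) :
    0 < 1 - p - q * r + p * q := by
  nlinarith [mul_pos (sub_pos.2 hp) (sub_pos.2 hq), mul_nonneg hq₀ (sub_pos.2 hr).le]

section G

variable {a b c d x : ℝ}

lemma G_exponent_pos (ha : 0 < a) (hc : 0 < c) (hx : 0 < x) :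
    0 < a * x ^ b * (Real.exp (c * x ^ d) - 1) := by
  have : 1 < Real.exp (c * x ^ d) := one_lt_exp_iff.2 (mul_pos hc (rpow_pos_of_pos hx d))
  exact mul_pos (mul_pos ha (rpow_pos_of_pos hx b)) (by linarith)

lemma G_pos (ha : 0 < a) (hc : 0 < c) (hx : 0 < x) : 0 < G a b c d x := by
  rw [G, sub_pos, exp_lt_one_iff, neg_lt_zero]
  exact G_exponent_pos ha hc hx

lemma G_lt_one : G a b c d x < 1 := by
  rw [G, sub_lt_self_iff]
  exact exp_pos _

lemma hasDerivAt_G (hb : b ≠ 0) (hx : 0 < x) :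
    HasDerivAt (G a b c d)
      (a * b * x ^ (b - 1) *
        Real.exp (-(a * x ^ b * (Real.exp (c * x ^ d) - 1)) + c * x ^ d) *
        (1 + (c * d / b) * x ^ d - Real.exp (-(c * x ^ d)))) x := by
  have hxb : HasDerivAt (fun y : ℝ => y ^ b) (b * x ^ (b - 1)) x :=
    hasDerivAt_rpow_const (Or.inl hx.ne')
  have hxd : HasDerivAt (fun y : ℝ => y ^ d) (d * x ^ (d - 1)) x :=
    hasDerivAt_rpow_const (Or.inl hx.ne')
  have hT : HasDerivAt (fun y => a * y ^ b * (Real.exp (c * y ^ d) - 1))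
      (a * (b * x ^ (b - 1)) * (Real.exp (c * x ^ d) - 1) +
        a * x ^ b * (Real.exp (c * x ^ d) * (c * (d * x ^ (d - 1))))) x :=
    (hxb.const_mul a).mul (((hxd.const_mul c).exp).sub_const 1)
  refine (hT.neg.exp.const_sub 1).congr_deriv ?_
  have hpow : x ^ b * x ^ (d - 1) = x ^ (b - 1) * x ^ d := by
    rw [← rpow_add hx, ← rpow_add hx]; ring_nf
  simp only [Pi.neg_apply]
  rw [exp_add, exp_neg (c * x ^ d)]
  field_simp
  linear_combination (a * c * d * Real.exp (c * x ^ d)) * hpow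

lemma hasDerivAt_G_rpow (α : ℝ) (ha : 0 < a) (hb : b ≠ 0) (hc : 0 < c) (hx : 0 < x) :
    HasDerivAt (fun y => G a b c d y ^ α) (egwgdPdf a b c d α x) x :=
  ((hasDerivAt_G hb hx).rpow_const (Or.inl (G_pos ha hc hx).ne')).congr_deriv
    (by rw [egwgdPdf]; ring)

end G

theorem stmt_12_general (a b c d : ℝ) (ha : 0 < a) (hb : 0 < b) (hc : 0 < c)
    (α₁ α₂ α₃ : ℝ) (hα₁ : 0 < α₁) (hα₂ : 0 < α₂) (hα₃ : 0 < α₃)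
    (R : ℝ → ℝ → ℝ)
    (hR : ∀ y₁ y₂ : ℝ, R y₁ y₂ =
      1 - (G a b c d y₁) ^ (α₁ + α₃) - (G a b c d y₂) ^ (α₂ + α₃) +
        (G a b c d y₁) ^ (α₁ + α₃) * (G a b c d y₂) ^ α₂)
    (x₁ x₂ : ℝ) (hx₁ : 0 < x₁) (hx₁₂ : x₁ < x₂) :
    0 < R x₁ x₂ ∧
      -(deriv (fun y₁ : ℝ => Real.log (R y₁ x₂)) x₁) =
        egwgdPdf a b c d (α₁ + α₃) x₁ * (1 - (G a b c d x₂) ^ α₂) / R x₁ x₂ := by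
  have hG₁ := G_pos (b := b) (d := d) ha hc hx₁
  have hG₂ := G_pos (b := b) (d := d) ha hc (hx₁.trans hx₁₂)
  have hRpos : 0 < R x₁ x₂ := by
    rw [hR, rpow_add hG₂]
    exact one_sub_sub_add_pos (rpow_lt_one hG₁.le G_lt_one (by linarith))
      (rpow_nonneg hG₂.le _) (rpow_lt_one hG₂.le G_lt_one hα₂)
      (rpow_lt_one hG₂.le G_lt_one hα₃)
  refine ⟨hRpos, ?_⟩
  have hGp := hasDerivAt_G_rpow (α₁ + α₃) ha hb.ne' hc hx₁ (d := d)
  have hRd : HasDerivAt (fun y₁ => R y₁ x₂)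
      (egwgdPdf a b c d (α₁ + α₃) x₁ * (G a b c d x₂ ^ α₂ - 1)) x₁ := by
    simp only [hR]
    exact (((hGp.const_sub 1).sub_const _).add (hGp.mul_const _)).congr_deriv (by ring)
  rw [(hRd.log hRpos.ne').deriv]
  ring

theorem stmt_12 (a b c d : ℝ) (ha : 0 < a) (hb : 0 < b) (hc : 0 < c) (hd : 0 < d)
    (α₁ α₂ α₃ : ℝ) (hα₁ : 0 < α₁) (hα₂ : 0 < α₂) (hα₃ : 0 < α₃)
    (R : ℝ → ℝ → ℝ)
    (hR : ∀ y₁ y₂ : ℝ, R y₁ y₂ =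
      1 - (G a b c d y₁) ^ (α₁ + α₃) - (G a b c d y₂) ^ (α₂ + α₃) +
        (G a b c d y₁) ^ (α₁ + α₃) * (G a b c d y₂) ^ α₂)
    (x₁ x₂ : ℝ) (hx₁ : 0 < x₁) (hx₁₂ : x₁ < x₂) :
    0 < R x₁ x₂ ∧
      -(deriv (fun y₁ : ℝ => Real.log (R y₁ x₂)) x₁) =
        egwgdPdf a b c d (α₁ + α₃) x₁ * (1 - (G a b c d x₂) ^ α₂) / R x₁ x₂ :=
  stmt_12_general a b c d ha hb hc α₁ α₂ α₃ hα₁ hα₂ hα₃ R hR x₁ x₂ hx₁ hx₁₂
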